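/- For every atom p, the formula ¬p → p is E*-valid, where E* is the ruleset E with rule D10 replaced by rule D10*: Proponent may assert an atom p only if Opponent has asserted p or ¬p before. (Hence E* fails to characterize the intermediate logic LQ of weak excluded middle.) -/

import Mathlib

/- Formalization of Lorenzen dialogue games, following Felscher's presentation.

   Propositional formulas are built from atoms using ¬, ∧, ∨, →.  A dialogue
   for a formula φ is a sequence of moves beginning with Proponent (P)
   asserting φ at position 0, with O moving at odd positions and P at even
   positions.  Each later move attacks or defends an earlier move of the other
   player, according to the particle rules.  Structural rules (D10, D11, D12,
   D13, E, and the variants D10*, D10′) constrain dialogues further.  P wins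
   if P made the last move and no moves are available to O; φ is S-valid if P
   has an S-winning strategy for φ. -/

namespace LorenzenDialogues

/-- Propositional formulas: atoms, ¬, ∧, ∨, →. -/
inductive Formula : Type
  | atom : ℕ → Formula
  | neg  : Formula → Formula
  | and  : Formula → Formula → Formula
  | or   : Formula → Formula → Formula
  | imp  : Formula → Formula → Formula
deriving DecidableEq

/-- Statements: formulas together with the symbolic attacks `?`, `∧_L`, `∧_R`. -/
inductive Statement : Type
  | form  : Formula → Statement
  | qmark : Statement
  | andL  : Statement
  | andR  : Statement
deriving DecidableEq

/-- Particle rules, attack part: which statements attack which formulas. -/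
inductive Attacks : Statement → Formula → Prop
  | andL (a b : Formula) : Attacks .andL (.and a b)
  | andR (a b : Formula) : Attacks .andR (.and a b)
  | qmark (a b : Formula) : Attacks .qmark (.or a b)
  | imp (a b : Formula) : Attacks (.form a) (.imp a b)
  | neg (a : Formula) : Attacks (.form a) (.neg a)

/-- Particle rules, defense part: `Defends χ a s` means `s` is a permitted
    defense of the formula `χ` against the attack `a`.  (A negation admits
    no defense.) -/
inductive Defends : Formula → Statement → Statement → Prop
  | andL (a b : Formula) : Defends (.and a b) .andL (.form a)
  | andR (a b : Formula) : Defends (.and a b) .andR (.form b)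
  | orL (a b : Formula) : Defends (.or a b) .qmark (.form a)
  | orR (a b : Formula) : Defends (.or a b) .qmark (.form b)
  | imp (a b : Formula) : Defends (.imp a b) (.form a) (.form b)

/-- A move: a statement, a flag recording whether it is an attack (`true`)
    or a defense (`false`), and the position of the earlier move it attacks,
    resp. the earlier attack it defends against. -/
structure Move : Type where
  statement : Statement
  isAttack : Bool
  ref : ℕ
deriving DecidableEq

/-- A dialogue: the initial formula asserted by P at position 0, followed by
    the list of later moves (the move at list index `i` occupies position
    `i + 1`; O moves at odd positions, P at even positions). -/
structure Dialogue : Type where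
  initial : Formula
  moves : List Move

/-- The statement asserted at position `n` (if any). -/
def Dialogue.stmtAt (d : Dialogue) (n : ℕ) : Option Statement :=
  if n = 0 then some (.form d.initial) else (d.moves[n - 1]?).map Move.statement

/-- The move at position `n ≥ 1` (if any); position 0 is the initial assertion,
    not a move. -/
def Dialogue.moveAt (d : Dialogue) (n : ℕ) : Option Move :=
  if n = 0 then none else d.moves[n - 1]?

/-- The move `m`, played at position `n ≥ 1`, is permitted by the particle
    rules: it refers to an earlier position of the other player; if it is an
    attack, it attacks a formula asserted there, and if it is a defense, it
    responds to an attack played there, as the particle rules prescribe. -/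
def MoveOK (d : Dialogue) (n : ℕ) (m : Move) : Prop :=
  m.ref < n ∧ m.ref % 2 ≠ n % 2 ∧
    (m.isAttack = true →
      ∃ ψ, d.stmtAt m.ref = some (.form ψ) ∧ Attacks m.statement ψ) ∧
    (m.isAttack = false →
      ∃ a χ, d.moveAt m.ref = some a ∧ a.isAttack = true ∧
        d.stmtAt a.ref = some (.form χ) ∧ Defends χ a.statement m.statement)

/-- The dialogue adheres to the particle rules (every move is legal). -/
def ParticleOK (d : Dialogue) : Prop :=
  ∀ i m, d.moves[i]? = some m → MoveOK d (i + 1) m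

/-- Position `n` carries a defense of the attack made at position `r`. -/
def IsDefenseOf (d : Dialogue) (n r : ℕ) : Prop :=
  ∃ m, d.moveAt n = some m ∧ m.isAttack = false ∧ m.ref = r

/-- Position `n` carries an attack on the assertion made at position `r`. -/
def IsAttackOn (d : Dialogue) (n r : ℕ) : Prop :=
  ∃ m, d.moveAt n = some m ∧ m.isAttack = true ∧ m.ref = r

/-- Position `n` carries an attack. -/
def IsAttackPos (d : Dialogue) (n : ℕ) : Prop :=
  ∃ m, d.moveAt n = some m ∧ m.isAttack = true

/-- The attack at position `r` is still open (no defense against it has yet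
    been played) before position `k`. -/
def OpenAt (d : Dialogue) (r k : ℕ) : Prop :=
  IsAttackPos d r ∧ ¬ ∃ j, j < k ∧ IsDefenseOf d j r

/-- (D10) P may assert an atomic formula only after it has been asserted by O
    before. -/
def D10 (d : Dialogue) : Prop :=
  ∀ n p, n % 2 = 0 → d.stmtAt n = some (.form (.atom p)) →
    ∃ j, j < n ∧ j % 2 = 1 ∧ d.stmtAt j = some (.form (.atom p))

/-- (D10*) P may assert an atom `p` only if O has asserted `p` or `¬p`
    before. -/
def D10star (d : Dialogue) : Prop :=
  ∀ n p, n % 2 = 0 → d.stmtAt n = some (.form (.atom p)) →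
    ∃ j, j < n ∧ j % 2 = 1 ∧
      (d.stmtAt j = some (.form (.atom p)) ∨
        d.stmtAt j = some (.form (.neg (.atom p))))

/-- (D10′) P may assert an atom `p` only if O has asserted `p` or `¬¬p`
    before. -/
def D10prime (d : Dialogue) : Prop :=
  ∀ n p, n % 2 = 0 → d.stmtAt n = some (.form (.atom p)) →
    ∃ j, j < n ∧ j % 2 = 1 ∧
      (d.stmtAt j = some (.form (.atom p)) ∨
        d.stmtAt j = some (.form (.neg (.neg (.atom p)))))

/-- (D11) When defending, only the most recent open attack may be responded
    to: the attack defended against is open, and no strictly more recent open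
    attack (against the same player) exists. -/
def D11 (d : Dialogue) : Prop :=
  ∀ n r, IsDefenseOf d n r →
    OpenAt d r n ∧ ¬ ∃ r', r < r' ∧ r' < n ∧ r' % 2 = r % 2 ∧ OpenAt d r' n

/-- (D12) An attack may be answered at most once. -/
def D12 (d : Dialogue) : Prop :=
  ∀ n₁ n₂ r, IsDefenseOf d n₁ r → IsDefenseOf d n₂ r → n₁ = n₂

/-- (D13) A P-assertion (made at an even position) may be attacked at most
    once. -/
def D13 (d : Dialogue) : Prop :=
  ∀ n₁ n₂ r, r % 2 = 0 → IsAttackOn d n₁ r → IsAttackOn d n₂ r → n₁ = n₂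

/-- (E) O can react only upon the immediately preceding P-statement. -/
def ERule (d : Dialogue) : Prop :=
  ∀ n m, n % 2 = 1 → d.moveAt n = some m → m.ref = n - 1

/-- A ruleset is a set of structural rules, i.e. a predicate on dialogues. -/
def Ruleset := Dialogue → Prop

/-- Ruleset D = {D10, D11, D12, D13}. -/
def rulesetD : Ruleset := fun d => D10 d ∧ D11 d ∧ D12 d ∧ D13 d

/-- Ruleset E = D ∪ {E}. -/
def rulesetE : Ruleset := fun d => rulesetD d ∧ ERule d

/-- Ruleset CL = E − {D11, D12} = {D10, D13, E}. -/
def rulesetCL : Ruleset := fun d => D10 d ∧ D13 d ∧ ERule d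

/-- Ruleset N = D − {D11, D12} = {D10, D13}. -/
def rulesetN : Ruleset := fun d => D10 d ∧ D13 d

/-- Ruleset E* = {D10*, D11, D12, D13, E}. -/
def rulesetEstar : Ruleset :=
  fun d => D10star d ∧ D11 d ∧ D12 d ∧ D13 d ∧ ERule d

/-- Ruleset E′ = {D10′, D11, D12, D13, E}. -/
def rulesetEprime : Ruleset :=
  fun d => D10prime d ∧ D11 d ∧ D12 d ∧ D13 d ∧ ERule d

/-- An S-dialogue: a dialogue adhering to the particle rules and to the
    structural rules S. -/
def Legal (S : Ruleset) (d : Dialogue) : Prop := ParticleOK d ∧ S d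

/-- Extend a dialogue by one move. -/
def Dialogue.extend (d : Dialogue) (m : Move) : Dialogue :=
  ⟨d.initial, d.moves ++ [m]⟩

/-- The position about to be played. -/
def nextPos (d : Dialogue) : ℕ := d.moves.length + 1

/-- It is P's turn (the next position is even). -/
def PTurn (d : Dialogue) : Prop := nextPos d % 2 = 0

/-- The move `m` legally extends the S-dialogue `d`. -/
def LegalExt (S : Ruleset) (d : Dialogue) (m : Move) : Prop :=
  Legal S (d.extend m)

/-- `PWinningC S C d` holds when P, moving under the additional constraint
    `C` on P's own choices, has a winning strategy in the S-dialogue game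
    continuing the dialogue `d`: at P's turn, P has a legal move (satisfying
    `C`) after which P is still winning; at O's turn, every legal O-move
    leads to a position where P is winning (in particular, if no O-move is
    available, P has won: P made the last move and O cannot move). -/
inductive PWinningC (S : Ruleset) (C : Dialogue → Move → Prop) : Dialogue → Prop
  | pMove (d : Dialogue) (m : Move) (hturn : PTurn d)
      (hm : LegalExt S d m) (hC : C d m)
      (h : PWinningC S C (d.extend m)) : PWinningC S C d
  | oMoves (d : Dialogue) (hturn : ¬ PTurn d)
      (h : ∀ m, LegalExt S d m → PWinningC S C (d.extend m)) :
      PWinningC S C d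

/-- P has a winning strategy continuing the S-dialogue `d`. -/
def PWinning (S : Ruleset) (d : Dialogue) : Prop :=
  PWinningC S (fun _ _ => True) d

/-- `valid S φ` (written `⊨_S φ`): the opening assertion of φ is itself a
    legal S-dialogue and P has an S-winning strategy for φ. -/
def valid (S : Ruleset) (φ : Formula) : Prop :=
  Legal S ⟨φ, []⟩ ∧ PWinning S ⟨φ, []⟩

/-- Derivability in intuitionistic propositional logic (a Hilbert-style
    axiomatization with modus ponens). -/
inductive IProv : Formula → Prop
  | k (a b : Formula) : IProv (.imp a (.imp b a))
  | s (a b c : Formula) :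
      IProv (.imp (.imp a (.imp b c)) (.imp (.imp a b) (.imp a c)))
  | andE1 (a b : Formula) : IProv (.imp (.and a b) a)
  | andE2 (a b : Formula) : IProv (.imp (.and a b) b)
  | andI (a b : Formula) : IProv (.imp a (.imp b (.and a b)))
  | orI1 (a b : Formula) : IProv (.imp a (.or a b))
  | orI2 (a b : Formula) : IProv (.imp b (.or a b))
  | orE (a b c : Formula) :
      IProv (.imp (.imp a c) (.imp (.imp b c) (.imp (.or a b) c)))
  | negI (a b : Formula) :
      IProv (.imp (.imp a b) (.imp (.imp a (.neg b)) (.neg a)))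
  | negE (a b : Formula) : IProv (.imp (.neg a) (.imp a b))
  | mp (a b : Formula) : IProv (.imp a b) → IProv a → IProv b

/-- The stability principle ¬¬p → p for the atom `p`. -/
def stab (p : ℕ) : Formula := .imp (.neg (.neg (.atom p))) (.atom p)

/-- Stable logic: intuitionistic propositional logic plus all instances of
    the stability scheme ¬¬p → p for atoms p, closed under modus ponens. -/
inductive StableProv : Formula → Prop
  | intuit (a : Formula) : IProv a → StableProv a
  | stab (p : ℕ) : StableProv (stab p)
  | mp (a b : Formula) : StableProv (.imp a b) → StableProv a → StableProv b

/-- Boolean evaluation of a formula under a valuation of its atoms. -/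
def Formula.eval (v : ℕ → Bool) : Formula → Bool
  | .atom p => v p
  | .neg a => !(a.eval v)
  | .and a b => a.eval v && b.eval v
  | .or a b => a.eval v || b.eval v
  | .imp a b => !(a.eval v) || b.eval v

/-- A classical tautology: true under every Boolean valuation. -/
def Tautology (φ : Formula) : Prop := ∀ v, φ.eval v = true

/-- Uniform substitution of formulas for atoms, applied homomorphically. -/
def Formula.subst (σ : ℕ → Formula) : Formula → Formula
  | .atom p => σ p
  | .neg a => .neg (a.subst σ)
  | .and a b => .and (a.subst σ) (b.subst σ)
  | .or a b => .or (a.subst σ) (b.subst σ)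
  | .imp a b => .imp (a.subst σ) (b.subst σ)

/-- The atoms occurring in a formula. -/
def Formula.atoms : Formula → List ℕ
  | .atom p => [p]
  | .neg a => a.atoms
  | .and a b => a.atoms ++ b.atoms
  | .or a b => a.atoms ++ b.atoms
  | .imp a b => a.atoms ++ b.atoms

/-- Conjunction of a nonempty list of formulas. -/
def conjList (f : Formula) : List Formula → Formula
  | [] => f
  | g :: gs => .and f (conjList g gs)

/-- The conjunction (¬¬p → p) ∧ … of stability instances for the atoms
    `p :: ps`. -/
def stabConj (p : ℕ) (ps : List ℕ) : Formula :=
  conjList (stab p) (ps.map stab)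

/- O's only opening is to attack `¬p → p` by asserting `¬p`. Instead of defending, P
counterattacks `¬p` by asserting `p`, which D10* permits because O has asserted `¬p` (D10 would
not). By rule E, O must then react to that last move: the atom `p` cannot be attacked and an attack
on a negation admits no defense, so O is stuck and P wins. -/

namespace Dialogue

theorem mem_moves_of_moveAt {d : Dialogue} {n : ℕ} {m : Move} (h : d.moveAt n = some m) :
    m ∈ d.moves := by
  unfold moveAt at h
  split_ifs at h
  exact List.mem_of_getElem? h

theorem stmtAt_of_moveAt {d : Dialogue} {n : ℕ} {m : Move} (h : d.moveAt n = some m) :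
    d.stmtAt n = some m.statement := by
  unfold moveAt at h
  unfold stmtAt
  split_ifs at h ⊢
  simp [h]

theorem moveAt_extend_of_eq_some {d : Dialogue} {n : ℕ} {a : Move} (m : Move)
    (h : d.moveAt n = some a) : (d.extend m).moveAt n = some a := by
  unfold moveAt at h ⊢
  split_ifs at h ⊢
  rw [extend, List.getElem?_append_left (List.getElem?_eq_some_iff.mp h).1, h]

theorem stmtAt_extend_of_eq_some {d : Dialogue} {n : ℕ} {s : Statement} (m : Move)
    (h : d.stmtAt n = some s) : (d.extend m).stmtAt n = some s := by
  unfold stmtAt at h ⊢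
  split_ifs at h ⊢
  · exact h
  · obtain ⟨a, ha, rfl⟩ := Option.map_eq_some_iff.mp h
    simp [extend, List.getElem?_append_left (List.getElem?_eq_some_iff.mp ha).1, ha]

theorem moveAt_extend_self (d : Dialogue) (m : Move) :
    (d.extend m).moveAt (d.moves.length + 1) = some m := by
  simp [moveAt, extend]

end Dialogue

theorem not_attacks_atom (s : Statement) (q : ℕ) : ¬ Attacks s (.atom q) := nofun

theorem not_defends_neg (χ : Formula) (a s : Statement) : ¬ Defends (.neg χ) a s := nofun

theorem D11_of_forall_isAttack {d : Dialogue} (h : ∀ m ∈ d.moves, m.isAttack = true) : D11 d :=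
  fun _ _ ⟨_, hm, hdef, _⟩ => by simp [h _ (Dialogue.mem_moves_of_moveAt hm)] at hdef

theorem D12_of_forall_isAttack {d : Dialogue} (h : ∀ m ∈ d.moves, m.isAttack = true) : D12 d :=
  fun _ _ _ ⟨_, hm, hdef, _⟩ => by simp [h _ (Dialogue.mem_moves_of_moveAt hm)] at hdef

theorem legal_Estar_opening {φ : Formula} (hφ : ∀ q, φ ≠ .atom q) :
    Legal rulesetEstar ⟨φ, []⟩ := by
  have no_move : ∀ n m, (⟨φ, []⟩ : Dialogue).moveAt n ≠ some m := by
    intro n m h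
    simpa using Dialogue.mem_moves_of_moveAt h
  refine ⟨fun _ _ h => by simp at h, ?_, D11_of_forall_isAttack (by simp),
    D12_of_forall_isAttack (by simp), fun _ _ _ _ ⟨m, h, _⟩ => (no_move _ m h).elim,
    fun _ m _ h => (no_move _ m h).elim⟩
  rintro (_ | n) q - h
  · exact (hφ q (Statement.form.inj (Option.some.inj h))).elim
  · simp [Dialogue.stmtAt] at h

theorem eq_of_legalExt_opening_imp {S : Ruleset} {a b : Formula} {m : Move}
    (hm : LegalExt S ⟨.imp a b, []⟩ m) : m = ⟨.form a, true, 0⟩ := by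
  obtain ⟨s, isAttack, r⟩ := m
  obtain ⟨hr, -, hatt, hdef⟩ := hm.1 0 _ rfl
  obtain rfl : r = 0 := Nat.lt_one_iff.mp hr
  cases isAttack with
  | false =>
    obtain ⟨_, _, h, -⟩ := hdef rfl
    simp [Dialogue.moveAt] at h
  | true =>
    obtain ⟨ψ, hψ, hatk⟩ := hatt rfl
    simp only [Dialogue.stmtAt, if_true, Option.some.injEq, Statement.form.injEq] at hψ
    subst hψ
    cases hatk
    rfl

/-- Rule E forces O to answer P's last move, which here can be neither attacked nor defended. -/
theorem not_legalExt_Estar_of_atom_attack_on_neg {d : Dialogue} {q r : ℕ} {χ : Formula}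
    (hturn : ¬ PTurn d) (hlast : d.moveAt d.moves.length = some ⟨.form (.atom q), true, r⟩)
    (hr : d.stmtAt r = some (.form (.neg χ))) (m : Move) : ¬ LegalExt rulesetEstar d m := by
  rintro ⟨hpart, -, -, -, -, hE⟩
  have hodd : (d.moves.length + 1) % 2 = 1 := by
    simp only [PTurn, nextPos] at hturn; omega
  have href : m.ref = d.moves.length := by
    simpa using hE _ m hodd (Dialogue.moveAt_extend_self d m)
  obtain ⟨-, -, hatt, hdef⟩ := hpart d.moves.length m (by simp [Dialogue.extend])
  rw [href] at hatt hdef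
  cases hm : m.isAttack
  · obtain ⟨a, χ', ha, -, hχ', hdef⟩ := hdef hm
    rw [Dialogue.moveAt_extend_of_eq_some m hlast, Option.some.injEq] at ha
    subst ha
    rw [Dialogue.stmtAt_extend_of_eq_some m hr, Option.some.injEq, Statement.form.injEq] at hχ'
    subst hχ'
    exact not_defends_neg χ _ _ hdef
  · obtain ⟨ψ, hψ, hatk⟩ := hatt hm
    rw [Dialogue.stmtAt_extend_of_eq_some m (Dialogue.stmtAt_of_moveAt hlast),
      Option.some.injEq, Statement.form.injEq] at hψ
    subst hψ
    exact not_attacks_atom _ q hatk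

theorem legal_Estar_counterattack (p : ℕ) (ψ : Formula) :
    Legal rulesetEstar ⟨.imp (.neg (.atom p)) ψ,
      [⟨.form (.neg (.atom p)), true, 0⟩, ⟨.form (.atom p), true, 1⟩]⟩ := by
  refine ⟨?particle, ?D10star, D11_of_forall_isAttack (by simp),
    D12_of_forall_isAttack (by simp), ?D13, ?E⟩
  case particle =>
    rintro (_ | _ | i) m h <;> simp only [List.getElem?_cons_zero, List.getElem?_cons_succ,
      List.getElem?_nil, reduceCtorEq, Option.some.injEq] at h <;> subst h
    · exact ⟨zero_lt_one, Nat.zero_ne_one, fun _ => ⟨_, rfl, .imp _ _⟩, nofun⟩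
    · exact ⟨one_lt_two, Nat.one_ne_zero, fun _ => ⟨_, rfl, .neg _⟩, nofun⟩
  case D10star =>
    rintro (_ | _ | _ | n) q hn h <;> simp [Dialogue.stmtAt] at hn h
    subst h
    exact ⟨1, one_lt_two, rfl, Or.inr rfl⟩
  case D13 =>
    have attacked_once : ∀ n r, r % 2 = 0 → IsAttackOn
        ⟨.imp (.neg (.atom p)) ψ, [⟨.form (.neg (.atom p)), true, 0⟩, ⟨.form (.atom p), true, 1⟩]⟩
        n r → n = 1 := by
      rintro (_ | _ | _ | n) r hr ⟨m, hm, -, rfl⟩ <;> simp [Dialogue.moveAt] at hm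
      · rfl
      · subst hm; simp at hr
    intro n₁ n₂ r hr h₁ h₂
    rw [attacked_once n₁ r hr h₁, attacked_once n₂ r hr h₂]
  case E =>
    rintro (_ | _ | _ | n) m hn hm <;> simp [Dialogue.moveAt] at hn hm
    subst hm; rfl

/-- For every atom p, the formula ¬p → p is E*-valid (so E* fails to
characterize the logic LQ of weak excluded middle). -/
theorem negp_imp_p_Estar_valid (p : ℕ) :
    valid rulesetEstar (.imp (.neg (.atom p)) (.atom p)) := by
  refine ⟨legal_Estar_opening fun _ => nofun, .oMoves _ (by simp [PTurn, nextPos]) ?_⟩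
  intro m hm
  obtain rfl := eq_of_legalExt_opening_imp hm
  refine .pMove _ ⟨.form (.atom p), true, 1⟩ (by simp [PTurn, nextPos, Dialogue.extend])
    (legal_Estar_counterattack p _) trivial ?_
  refine .oMoves _ (by simp [PTurn, nextPos, Dialogue.extend]) fun m hm => ?_
  exact (not_legalExt_Estar_of_atom_attack_on_neg (χ := .atom p)
    (by simp [PTurn, nextPos, Dialogue.extend]) rfl rfl m hm).elim

end LorenzenDialogues
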